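/- arXiv:1905.12317 — 2 statements merged into one kernel-verified Lean document; each statement's English description precedes it below -/
import Mathlib

section
/- For every integer n ≥ 1 and every real z with 0 ≤ z ≤ e^{−2} n, one has |J_n(z)| ≤ e^{−n}. That is, the Bessel function of integer order n is bounded by e^{−n} whenever its argument is at most e^{−2} times its order. -/
open MeasureTheory intervalIntegral Complex

/-- The Bessel function of integer order `n`, defined via the integral representation
`J_n(z) = (1/(2π)) ∫₀^{2π} exp(i (z sin α − n α)) dα`. -/
noncomputable def besselJ (n : ℤ) (z : ℝ) : ℂ :=
  (1 / (2 * Real.pi)) *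
    ∫ α in (0:ℝ)..(2 * Real.pi), Complex.exp (Complex.I * ((z * Real.sin α - n * α : ℝ) : ℂ))

lemma exp_int_integral_zero (m : ℤ) (hm : m ≠ 0) :
    ∫ α in (0:ℝ)..(2 * Real.pi), Complex.exp ((m * Complex.I) * α) = 0 := by
  have hc : (m : ℂ) * Complex.I ≠ 0 := by simp [Complex.I_ne_zero, hm]
  rw [integral_exp_mul_complex hc]
  have h1 : Complex.exp ((m:ℂ) * Complex.I * (2 * (Real.pi:ℂ))) = 1 := by
    rw [show ((m:ℂ)) * Complex.I * (2 * (Real.pi:ℂ)) = m * (2 * Real.pi * Complex.I) by ring]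
    exact Complex.exp_int_mul_two_pi_mul_I m
  simp [h1]

lemma cont_aux (k : ℕ) (m : ℤ) :
    Continuous (fun α : ℝ => (Real.sin α : ℂ) ^ k * Complex.exp ((-(m:ℂ) * Complex.I) * α)) := by
  fun_prop

lemma sin_pow_exp_integral_zero : ∀ (k : ℕ) (m : ℤ), (k : ℤ) < m →
    ∫ α in (0:ℝ)..(2 * Real.pi), (Real.sin α : ℂ) ^ k * Complex.exp ((-(m:ℂ) * Complex.I) * α) = 0 := by
  intro k
  induction k with
  | zero =>
    intro m hm
    simpa using exp_int_integral_zero (-m) (by omega)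
  | succ k ih =>
    intro m hm
    have key : ∀ α : ℝ, (Real.sin α : ℂ) ^ (k+1) * Complex.exp ((-(m:ℂ) * Complex.I) * α)
        = (Complex.I/2) * ((Real.sin α : ℂ) ^ k * Complex.exp ((-((m+1:ℤ):ℂ) * Complex.I) * α))
        - (Complex.I/2) * ((Real.sin α : ℂ) ^ k * Complex.exp ((-((m-1:ℤ):ℂ) * Complex.I) * α)) := by
      intro α
      have e1 : Complex.exp ((-((m+1:ℤ):ℂ) * Complex.I) * α)
          = Complex.exp (-(α:ℂ)*Complex.I) * Complex.exp ((-(m:ℂ) * Complex.I) * α) := by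
        rw [← Complex.exp_add]; congr 1; push_cast; ring
      have e2 : Complex.exp ((-((m-1:ℤ):ℂ) * Complex.I) * α)
          = Complex.exp ((α:ℂ)*Complex.I) * Complex.exp ((-(m:ℂ) * Complex.I) * α) := by
        rw [← Complex.exp_add]; congr 1; push_cast; ring
      rw [pow_succ, Complex.ofReal_sin, Complex.sin, e1, e2]
      ring
    rw [intervalIntegral.integral_congr (fun α _ => key α)]
    rw [intervalIntegral.integral_sub, intervalIntegral.integral_const_mul,
        intervalIntegral.integral_const_mul]
    · rw [ih (m+1) (by push_cast at hm ⊢; linarith), ih (m-1) (by push_cast at hm ⊢; linarith)]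
      ring
    · exact (continuous_const.mul (cont_aux k (m+1))).intervalIntegrable _ _
    · exact (continuous_const.mul (cont_aux k (m-1))).intervalIntegrable _ _

noncomputable def Fk (n : ℕ) (z : ℝ) (k : ℕ) (α : ℝ) : ℂ :=
  ((k.factorial : ℂ)⁻¹ * (Complex.I * z)^k) *
    ((Real.sin α : ℂ) ^ k * Complex.exp ((-(n:ℂ) * Complex.I) * α))

lemma Fk_cont (n : ℕ) (z : ℝ) (k : ℕ) : Continuous (Fk n z k) := by
  unfold Fk; fun_prop

lemma Fk_tsum (n : ℕ) (z : ℝ) (α : ℝ) :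
    ∑' k, Fk n z k α = Complex.exp (Complex.I * ((z * Real.sin α - n * α : ℝ) : ℂ)) := by
  have h1 : ∀ k, Fk n z k α
      = ((k.factorial : ℂ)⁻¹ • (Complex.I * z * Real.sin α)^k) * Complex.exp ((-(n:ℂ) * Complex.I) * α) := by
    intro k; rw [Fk, smul_eq_mul, mul_pow]; ring
  rw [funext h1, tsum_mul_right]
  have h2 : (∑' k : ℕ, (k.factorial : ℂ)⁻¹ • (Complex.I * z * Real.sin α)^k)
      = Complex.exp (Complex.I * z * Real.sin α) := by
    rw [Complex.exp_eq_exp_ℂ, NormedSpace.exp_eq_tsum ℂ]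
  rw [h2, ← Complex.exp_add]
  congr 1
  push_cast
  ring

lemma Fk_norm (n : ℕ) (z : ℝ) (k : ℕ) (hz0 : 0 ≤ z) (α : ℝ) :
    ‖Fk n z k α‖ ≤ z ^ k / k.factorial := by
  rw [Fk]
  rw [norm_mul, norm_mul, norm_mul, norm_pow, norm_pow]
  simp only [norm_mul, Complex.norm_I, Complex.norm_real, Real.norm_eq_abs, norm_inv,
    Complex.norm_natCast, one_mul]
  have habs : ‖Complex.exp ((-(n:ℂ) * Complex.I) * α)‖ = 1 := by
    rw [Complex.norm_exp]
    norm_num [Complex.mul_re]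
  rw [habs, mul_one, _root_.abs_of_nonneg hz0]
  have h1 : |Real.sin α| ^ k ≤ 1 := pow_le_one₀ (abs_nonneg _) (Real.abs_sin_le_one α)
  have h2 : (0:ℝ) < k.factorial := by positivity
  calc (k.factorial:ℝ)⁻¹ * z ^ k * (|Real.sin α| ^ k)
      ≤ (k.factorial:ℝ)⁻¹ * z ^ k * 1 := by
        apply mul_le_mul_of_nonneg_left h1 (by positivity)
    _ = z ^ k / k.factorial := by field_simp

lemma main_bound (n : ℕ) (z : ℝ) (hz0 : 0 ≤ z) (hzero : ∀ k : ℕ, k < n →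
      ∫ α in (0:ℝ)..(2*Real.pi), (Real.sin α : ℂ) ^ k * Complex.exp ((-(n:ℂ) * Complex.I) * α) = 0) :
    ‖((1 / (2 * Real.pi) : ℂ) *
      ∫ α in (0:ℝ)..(2 * Real.pi), Complex.exp (Complex.I * ((z * Real.sin α - n * α : ℝ) : ℂ)))‖
      ≤ (∑' i : ℕ, z ^ (i + n) / (i + n).factorial) := by
  have hpi : (0:ℝ) < Real.pi := Real.pi_pos
  have hle : (0:ℝ) ≤ 2 * Real.pi := by positivity
  set μ : Measure ℝ := volume.restrict (Set.Ioc (0:ℝ) (2*Real.pi)) with hμ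
  have hμuniv : (μ Set.univ).toReal = 2 * Real.pi := by
    rw [hμ, Measure.restrict_apply_univ, Real.volume_Ioc]
    rw [ENNReal.toReal_ofReal (by linarith)]
    ring
  have hint : ∀ k, Integrable (Fk n z k) μ :=
    fun k => ((Fk_cont n z k).integrableOn_Ioc)
  have hbound : ∀ k, ∫ α, ‖Fk n z k α‖ ∂μ ≤ 2*Real.pi * (z^k / k.factorial) := by
    intro k
    have h1 : ∫ α, ‖Fk n z k α‖ ∂μ ≤ ∫ _α, (z^k / k.factorial) ∂μ := by
      apply integral_mono (hint k).norm (integrable_const _)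
      intro α
      exact Fk_norm n z k hz0 α
    rw [MeasureTheory.integral_const, measureReal_def, hμuniv, smul_eq_mul] at h1
    exact h1
  have hsummable : Summable (fun k => ∫ α, ‖Fk n z k α‖ ∂μ) := by
    apply Summable.of_nonneg_of_le
      (fun k => integral_nonneg (fun α => norm_nonneg _)) hbound
    exact (Real.summable_pow_div_factorial z).mul_left _
  have hsum := hasSum_integral_of_summable_integral_norm hint hsummable
  have htsum_eq : ∀ α : ℝ, ∑' k, Fk n z k α
      = Complex.exp (Complex.I * ((z * Real.sin α - n * α : ℝ) : ℂ)) := Fk_tsum n z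
  have hI : (∫ α, (∑' k, Fk n z k α) ∂μ)
      = ∫ α in (0:ℝ)..(2*Real.pi), Complex.exp (Complex.I * ((z * Real.sin α - n * α : ℝ) : ℂ)) := by
    rw [intervalIntegral.integral_of_le hle]
    exact setIntegral_congr_fun measurableSet_Ioc (fun α _ => htsum_eq α)
  have hIk : ∀ k, (∫ α, Fk n z k α ∂μ)
      = ((k.factorial : ℂ)⁻¹ * (Complex.I * z)^k) *
        ∫ α in (0:ℝ)..(2*Real.pi), (Real.sin α : ℂ) ^ k * Complex.exp ((-(n:ℂ) * Complex.I) * α) := by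
    intro k
    rw [intervalIntegral.integral_of_le hle, ← MeasureTheory.integral_const_mul]
    rfl
  have hnormIk : ∀ k, ‖∫ α, Fk n z k α ∂μ‖ ≤ (if k < n then 0 else 2*Real.pi * (z^k / k.factorial)) := by
    intro k
    by_cases hk : k < n
    · simp only [hk, if_true]
      rw [hIk k, hzero k hk, mul_zero, norm_zero]
    · simp only [hk, if_false]
      exact le_trans (norm_integral_le_integral_norm _) (hbound k)
  have hgsummable : Summable (fun k : ℕ => (if k < n then 0 else 2*Real.pi * (z^k / k.factorial))) := by
    apply Summable.of_nonneg_of_le (fun k => by positivity)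
      (fun k => ?_) ((Real.summable_pow_div_factorial z).mul_left (2*Real.pi))
    split
    · positivity
    · exact le_refl _
  have hIksummable : Summable (fun k => ‖∫ α, Fk n z k α ∂μ‖) :=
    Summable.of_nonneg_of_le (fun k => norm_nonneg _) hnormIk hgsummable
  have habs : ‖((1 / (2 * Real.pi) : ℂ) *
      ∫ α in (0:ℝ)..(2*Real.pi), Complex.exp (Complex.I * ((z * Real.sin α - n * α : ℝ) : ℂ)))‖
      = (1 / (2 * Real.pi)) * ‖∫ α in (0:ℝ)..(2*Real.pi), Complex.exp (Complex.I * ((z * Real.sin α - n * α : ℝ) : ℂ))‖ := by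
    rw [norm_mul]
    congr 1
    rw [show ((1 / (2 * Real.pi)) : ℂ) = ((1 / (2 * Real.pi) : ℝ) : ℂ) by push_cast; ring]
    rw [Complex.norm_real, Real.norm_eq_abs, _root_.abs_of_nonneg (by positivity)]
  rw [habs, ← hI, ← hsum.tsum_eq]
  have h2 : ‖∑' k, ∫ α, Fk n z k α ∂μ‖ ≤ ∑' k, ‖∫ α, Fk n z k α ∂μ‖ :=
    norm_tsum_le_tsum_norm hIksummable
  have h3 : (∑' k, ‖∫ α, Fk n z k α ∂μ‖)
      ≤ ∑' k : ℕ, (if k < n then 0 else 2*Real.pi * (z^k / k.factorial)) :=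
    Summable.tsum_le_tsum hnormIk hIksummable hgsummable
  have h4 : (∑' k : ℕ, (if k < n then 0 else 2*Real.pi * (z^k / k.factorial)))
      = 2*Real.pi * ∑' i : ℕ, z ^ (i + n) / (i + n).factorial := by
    rw [← Summable.sum_add_tsum_nat_add n hgsummable]
    have hz1 : ∀ i ∈ Finset.range n, (if i < n then (0:ℝ) else 2*Real.pi * (z^i / i.factorial)) = 0 := by
      intro i hi
      simp [Finset.mem_range.mp hi]
    rw [Finset.sum_eq_zero hz1, zero_add]
    rw [← tsum_mul_left]
    apply tsum_congr
    intro i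
    simp [Nat.not_lt.mpr (Nat.le_add_left n i)]
  have hpi2 : (0:ℝ) < 2 * Real.pi := by positivity
  calc (1 / (2*Real.pi)) * ‖∑' k, ∫ α, Fk n z k α ∂μ‖
      ≤ (1 / (2*Real.pi)) * (2*Real.pi * ∑' i : ℕ, z ^ (i + n) / (i + n).factorial) := by
        apply mul_le_mul_of_nonneg_left _ (by positivity)
        rw [← h4]
        exact le_trans h2 h3
    _ = ∑' i : ℕ, z ^ (i + n) / (i + n).factorial := by
        field_simp

lemma fact_exp_lower : ∀ n : ℕ, 1 ≤ n → 2 * (n:ℝ)^n ≤ n.factorial * Real.exp n := by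
  intro n hn
  induction n, hn using Nat.le_induction with
  | base =>
    simpa using (by linarith [Real.add_one_le_exp 1] : (2:ℝ) ≤ Real.exp 1)
  | succ n hn ih =>
    have hn0 : (0:ℝ) < n := by exact_mod_cast hn
    have key : ((n:ℝ)+1)^n ≤ (n:ℝ)^n * Real.exp 1 := by
      have h1 : (1 + 1/(n:ℝ)) ≤ Real.exp (1/n) := by
        have := Real.add_one_le_exp (1/(n:ℝ)); linarith
      have h2 : (1 + 1/(n:ℝ))^n ≤ Real.exp (1/n) ^ n :=
        pow_le_pow_left₀ (by positivity) h1 n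
      have h3 : Real.exp (1/(n:ℝ)) ^ n = Real.exp 1 := by
        rw [← Real.exp_nat_mul]
        congr 1
        field_simp
      have h4 : ((n:ℝ)+1)^n = (n:ℝ)^n * (1 + 1/(n:ℝ))^n := by
        rw [← mul_pow]
        congr 1
        field_simp
      rw [h4]
      have h5 : (1 + 1/(n:ℝ))^n ≤ Real.exp 1 := h3 ▸ h2
      nlinarith [pow_nonneg hn0.le n]
    have hfact : ((n+1).factorial : ℝ) = (n+1) * n.factorial := by
      rw [Nat.factorial_succ]; push_cast; ring
    have hexp : Real.exp ((n:ℝ)+1) = Real.exp n * Real.exp 1 := by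
      rw [← Real.exp_add]
    have hfn : (0:ℝ) ≤ n.factorial := by positivity
    have he1 : (0:ℝ) < Real.exp 1 := Real.exp_pos 1
    push_cast
    calc 2 * ((n:ℝ)+1)^(n+1) = ((n:ℝ)+1) * (2 * ((n:ℝ)+1)^n) := by ring
      _ ≤ ((n:ℝ)+1) * (2 * ((n:ℝ)^n * Real.exp 1)) := by nlinarith
      _ = ((n:ℝ)+1) * (2 * (n:ℝ)^n) * Real.exp 1 := by ring
      _ ≤ ((n:ℝ)+1) * (n.factorial * Real.exp n) * Real.exp 1 := by
          have h := mul_le_mul_of_nonneg_left ih (by positivity : (0:ℝ) ≤ ((n:ℝ)+1))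
          nlinarith [h]
      _ = ((n+1).factorial : ℝ) * Real.exp ((n:ℝ)+1) := by rw [hfact, hexp]; push_cast; ring

lemma tail_bound (n : ℕ) (hn : 1 ≤ n) (z : ℝ) (hz0 : 0 ≤ z) (hz : z ≤ Real.exp (-2) * n) :
    (∑' i : ℕ, z ^ (i + n) / (i + n).factorial) ≤ Real.exp (-(n : ℝ)) := by
  have hn0 : (0:ℝ) < n := by exact_mod_cast hn
  have hfac : (0:ℝ) < n.factorial := by positivity
  have hgeo : Real.exp (-2) < 1 := Real.exp_lt_one_iff.mpr (by norm_num)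
  have hgeo0 : (0:ℝ) ≤ Real.exp (-2) := (Real.exp_pos _).le
  have hpt : ∀ i : ℕ, z ^ (i + n) / (i + n).factorial
      ≤ (z ^ n / n.factorial) * Real.exp (-2) ^ i := by
    intro i
    have hfle : (n.factorial : ℝ) * (n:ℝ)^i ≤ ((i+n).factorial : ℝ) := by
      have h1 : n.factorial * n ^ i ≤ n.factorial * (n+1) ^ i :=
        Nat.mul_le_mul_left _ (Nat.pow_le_pow_left (by omega) i)
      have h2 : n.factorial * (n+1) ^ i ≤ (n + i).factorial :=
        Nat.factorial_mul_pow_le_factorial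
      have := le_trans h1 h2
      rw [Nat.add_comm n i] at this
      exact_mod_cast this
    have hznum : z ^ (i + n) ≤ (z ^ n * Real.exp (-2) ^ i) * (n:ℝ)^i := by
      have h1 : z ^ i ≤ (Real.exp (-2) * n) ^ i := pow_le_pow_left₀ hz0 hz i
      have h2 : z ^ (i+n) = z ^ n * z ^ i := by rw [pow_add]; ring
      rw [h2, mul_pow] at *
      nlinarith [pow_nonneg hz0 n, pow_nonneg hz0 i]
    have hd : (0:ℝ) < n.factorial * (n:ℝ)^i := by positivity
    calc z ^ (i + n) / (i + n).factorial
        ≤ ((z ^ n * Real.exp (-2) ^ i) * (n:ℝ)^i) / ((n.factorial : ℝ) * (n:ℝ)^i) :=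
          div_le_div₀ (by positivity) hznum hd hfle
      _ = (z ^ n / n.factorial) * Real.exp (-2) ^ i := by
          field_simp
  have hs1 : Summable (fun i : ℕ => z ^ (i + n) / (i + n).factorial) :=
    (summable_nat_add_iff n).mpr (Real.summable_pow_div_factorial z)
  have hs2 : Summable (fun i : ℕ => (z ^ n / n.factorial) * Real.exp (-2) ^ i) :=
    (summable_geometric_of_lt_one hgeo0 hgeo).mul_left _
  have hsum : (∑' i : ℕ, z ^ (i + n) / (i + n).factorial)
      ≤ (z ^ n / n.factorial) * (1 - Real.exp (-2))⁻¹ := by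
    calc (∑' i : ℕ, z ^ (i + n) / (i + n).factorial)
        ≤ ∑' i : ℕ, (z ^ n / n.factorial) * Real.exp (-2) ^ i := Summable.tsum_le_tsum hpt hs1 hs2
      _ = (z ^ n / n.factorial) * (1 - Real.exp (-2))⁻¹ := by
          rw [tsum_mul_left, tsum_geometric_of_lt_one hgeo0 hgeo]
  have hE : Real.exp (-2) ≤ 1/2 := by
    have h3 : (3:ℝ) ≤ Real.exp 2 := by linarith [Real.add_one_le_exp 2]
    rw [Real.exp_neg]
    rw [inv_le_comm₀ (Real.exp_pos 2) (by norm_num)]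
    linarith
  have hinv : (1 - Real.exp (-2))⁻¹ ≤ 2 := by
    rw [inv_le_comm₀ (by linarith) (by norm_num)]
    linarith
  have hzn : z ^ n / n.factorial ≤ Real.exp (-(n:ℝ)) / 2 := by
    rw [div_le_div_iff₀ hfac (by norm_num)]
    have hfl := fact_exp_lower n hn
    have hEn : (0:ℝ) < Real.exp (-(n:ℝ)) := Real.exp_pos _
    have hzn1 : z ^ n ≤ Real.exp (-2) ^ n * (n:ℝ)^n := by
      have := pow_le_pow_left₀ hz0 hz n
      rw [mul_pow] at this
      exact this
    have hexp2n : Real.exp (-2) ^ n = Real.exp (-(n:ℝ)) * Real.exp (-(n:ℝ)) := by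
      rw [← Real.exp_nat_mul, ← Real.exp_add]
      congr 1
      ring
    have hfl2 : 2 * (n:ℝ)^n * Real.exp (-(n:ℝ)) ≤ n.factorial := by
      have hen : Real.exp ((n:ℝ)) * Real.exp (-(n:ℝ)) = 1 := by
        rw [← Real.exp_add]; simp
      nlinarith [Real.exp_pos ((n:ℝ))]
    calc z ^ n * 2 ≤ (Real.exp (-2) ^ n * (n:ℝ)^n) * 2 := by linarith
      _ = 2 * (n:ℝ)^n * Real.exp (-(n:ℝ)) * Real.exp (-(n:ℝ)) := by rw [hexp2n]; ring
      _ ≤ (n.factorial : ℝ) * Real.exp (-(n:ℝ)) := by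
          have h1 := mul_le_mul_of_nonneg_right hfl2 hEn.le
          linarith
      _ = Real.exp (-(n:ℝ)) * n.factorial := by ring
  calc (∑' i : ℕ, z ^ (i + n) / (i + n).factorial)
      ≤ (z ^ n / n.factorial) * (1 - Real.exp (-2))⁻¹ := hsum
    _ ≤ (Real.exp (-(n:ℝ)) / 2) * 2 := by
        apply mul_le_mul hzn hinv (inv_nonneg.mpr (by linarith)) (by positivity)
    _ = Real.exp (-(n:ℝ)) := by ring

/-- For every integer `n ≥ 1` and every real `z` with `0 ≤ z ≤ e^{−2} n`,
one has `|J_n(z)| ≤ e^{−n}`. -/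
theorem besselJ_le_exp_neg_order
    (n : ℕ) (hn : 1 ≤ n) (z : ℝ) (hz0 : 0 ≤ z) (hz : z ≤ Real.exp (-2) * n) :
    ‖besselJ (n : ℤ) z‖ ≤ Real.exp (-(n : ℝ)) := by
  have h1 : besselJ (n : ℤ) z = (1 / (2 * Real.pi) : ℂ) *
      ∫ α in (0:ℝ)..(2 * Real.pi), Complex.exp (Complex.I * ((z * Real.sin α - (n:ℕ) * α : ℝ) : ℂ)) := by
    unfold besselJ
    norm_num
  rw [h1]
  refine le_trans (main_bound n z hz0 ?_) (tail_bound n hn z hz0 hz)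
  intro k hk
  have := sin_pow_exp_integral_zero k (n : ℤ) (by exact_mod_cast hk)
  simpa using this
end

section
/- Let A : ℝ² → ℂ be Lebesgue integrable and vanish outside the closed unit disk {‖x‖ ≤ 1}, and let Â(k) = ∫_{ℝ²} A(x) exp(−i ⟨k, x⟩) dx denote its Fourier transform. Then for every real k ≥ 0 and every integer q, (1/(2π)) ∫₀^{2π} Â(k cos ψ, k sin ψ) exp(−i q ψ) dψ = ∫₀^{2π} ∫₀^{1} A(x cos θ, x sin θ) exp(−i q (θ + π/2)) J_q(k x) · x dx dθ. That is, the q-th angular Fourier coefficient of the Fourier transform on the circle of radius k equals the Fourier–Bessel inner product of A with the function (x, θ) ↦ e^{i q (θ + π/2)} J_q(k x). -/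
open scoped InnerProductSpace
open MeasureTheory Real Set

noncomputable def e2 (a b : ℝ) : EuclideanSpace ℝ (Fin 2) := WithLp.toLp 2 ![a, b]

lemma e2_inner (a b c d : ℝ) : ⟪e2 a b, e2 c d⟫_ℝ = a * c + b * d := by
  simp [e2, PiLp.inner_apply, Fin.sum_univ_two]
  ring

lemma e2_norm (a b : ℝ) : ‖e2 a b‖ = Real.sqrt (a ^ 2 + b ^ 2) := by
  simp [e2, EuclideanSpace.norm_eq, Fin.sum_univ_two, sq_abs]

lemma e2_cont : Continuous fun p : ℝ × ℝ => e2 p.1 p.2 := by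
  exact (PiLp.continuous_toLp 2 _).comp (continuous_pi fun i => by fin_cases i <;> simp <;> fun_prop)

lemma exp_neg_I_q_two_pi (q : ℤ) : Complex.exp (-Complex.I * ((q : ℂ) * (2 * Real.pi))) = 1 := by
  have := Complex.exp_int_mul_two_pi_mul_I (-q)
  rw [← this]
  congr 1
  push_cast
  ring

lemma norm_exp_neg_I_real (a : ℝ) : ‖Complex.exp (-Complex.I * (a : ℂ))‖ = 1 := by
  rw [Complex.norm_exp]
  simp

/-- Key pointwise Bessel identity. -/
lemma bessel_key (k : ℝ) (q : ℤ) (r θ : ℝ) :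
    (∫ ψ in (0:ℝ)..(2 * Real.pi),
        Complex.exp (-Complex.I * ((k * Real.cos ψ * (r * Real.cos θ)
          + k * Real.sin ψ * (r * Real.sin θ) : ℝ) : ℂ)) *
          Complex.exp (-Complex.I * ((q : ℂ) * (ψ : ℂ))))
    = Complex.exp (-Complex.I * ((q : ℂ) * ((θ + Real.pi / 2 : ℝ) : ℂ)))
        * ((2 * Real.pi : ℂ) * besselJ q (k * r)) := by
  set f : ℝ → ℂ := fun ψ =>
    Complex.exp (-Complex.I * ((k * Real.cos ψ * (r * Real.cos θ)
      + k * Real.sin ψ * (r * Real.sin θ) : ℝ) : ℂ)) *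
      Complex.exp (-Complex.I * ((q : ℂ) * (ψ : ℂ))) with hf
  have hper : Function.Periodic f (2 * Real.pi) := by
    intro ψ
    simp only [hf]
    rw [Real.cos_add_two_pi, Real.sin_add_two_pi]
    congr 1
    push_cast
    rw [show (q : ℂ) * (ψ + 2 * Real.pi) = (q : ℂ) * ψ + (q : ℂ) * (2 * Real.pi) by ring,
      mul_add, Complex.exp_add, exp_neg_I_q_two_pi, mul_one]
  have h1 : (∫ ψ in (0:ℝ)..(2 * Real.pi), f ψ)
      = ∫ ψ in (θ + Real.pi / 2)..(θ + Real.pi / 2) + 2 * Real.pi, f ψ := by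
    have := hper.intervalIntegral_add_eq 0 (θ + Real.pi / 2)
    simpa using this
  have h2 : (∫ ψ in (θ + Real.pi / 2)..(θ + Real.pi / 2) + 2 * Real.pi, f ψ)
      = ∫ α in (0:ℝ)..(2 * Real.pi), f (α + (θ + Real.pi / 2)) := by
    rw [intervalIntegral.integral_comp_add_right]
    congr 1 <;> ring
  have h3 : ∀ α : ℝ, f (α + (θ + Real.pi / 2))
      = Complex.exp (Complex.I * ((k * r * Real.sin α - q * α : ℝ) : ℂ))
        * Complex.exp (-Complex.I * ((q : ℂ) * ((θ + Real.pi / 2 : ℝ) : ℂ))) := by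
    intro α
    simp only [hf]
    have htrig : k * Real.cos (α + (θ + Real.pi / 2)) * (r * Real.cos θ)
        + k * Real.sin (α + (θ + Real.pi / 2)) * (r * Real.sin θ)
        = -(k * r * Real.sin α) := by
      calc k * Real.cos (α + (θ + Real.pi / 2)) * (r * Real.cos θ)
            + k * Real.sin (α + (θ + Real.pi / 2)) * (r * Real.sin θ)
          = k * r * (Real.cos (α + (θ + Real.pi / 2)) * Real.cos θ
            + Real.sin (α + (θ + Real.pi / 2)) * Real.sin θ) := by ring
        _ = k * r * Real.cos (α + (θ + Real.pi / 2) - θ) := by rw [← Real.cos_sub]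
        _ = -(k * r * Real.sin α) := by
            rw [show α + (θ + Real.pi / 2) - θ = α + Real.pi / 2 by ring,
              Real.cos_add_pi_div_two]; ring
    rw [htrig, ← Complex.exp_add, ← Complex.exp_add]
    congr 1
    push_cast
    ring
  rw [h1, h2]
  rw [intervalIntegral.integral_congr (g := fun α =>
    Complex.exp (Complex.I * ((k * r * Real.sin α - q * α : ℝ) : ℂ))
      * Complex.exp (-Complex.I * ((q : ℂ) * ((θ + Real.pi / 2 : ℝ) : ℂ))))
    (fun α _ => h3 α)]
  rw [intervalIntegral.integral_mul_const, besselJ]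
  have hpi : (2 * (Real.pi:ℂ)) ≠ 0 := by
    simp [Complex.ofReal_ne_zero, Real.pi_ne_zero]
  field_simp

lemma e2_comp_eq : ∀ p : ℝ × ℝ,
    (MeasurableEquiv.toLp 2 (Fin 2 → ℝ)) ((MeasurableEquiv.finTwoArrow).symm p)
      = e2 p.1 p.2 := by
  intro p
  apply congrArg (WithLp.toLp 2)
  funext i
  fin_cases i <;> rfl

lemma integral_e2 (g : EuclideanSpace ℝ (Fin 2) → ℂ) :
    ∫ x, g x = ∫ p : ℝ × ℝ, g (e2 p.1 p.2) := by
  have h1 : MeasurePreserving ((MeasurableEquiv.toLp 2 (Fin 2 → ℝ))) :=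
    (EuclideanSpace.volume_preserving_symm_measurableEquiv_toLp (Fin 2)).symm _
  have h2 : MeasurePreserving ((MeasurableEquiv.finTwoArrow
      (α := ℝ)).symm) := (volume_preserving_finTwoArrow ℝ).symm _
  have hcomp := h1.comp h2
  have := hcomp.integral_comp
    (((MeasurableEquiv.finTwoArrow (α := ℝ)).symm.trans
      (MeasurableEquiv.toLp 2 (Fin 2 → ℝ))).measurableEmbedding) g
  rw [← this]
  exact (integral_congr_ae (Filter.Eventually.of_forall fun p => by
    simp only [Function.comp_apply, e2_comp_eq])).symm

lemma integrable_e2 (g : EuclideanSpace ℝ (Fin 2) → ℂ) (hg : Integrable g) :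
    Integrable (fun p : ℝ × ℝ => g (e2 p.1 p.2)) := by
  have h1 : MeasurePreserving ((MeasurableEquiv.toLp 2 (Fin 2 → ℝ))) :=
    (EuclideanSpace.volume_preserving_symm_measurableEquiv_toLp (Fin 2)).symm _
  have h2 : MeasurePreserving ((MeasurableEquiv.finTwoArrow
      (α := ℝ)).symm) := (volume_preserving_finTwoArrow ℝ).symm _
  have hcomp := h1.comp h2
  have := (hcomp.integrable_comp_emb
    (((MeasurableEquiv.finTwoArrow (α := ℝ)).symm.trans
      (MeasurableEquiv.toLp 2 (Fin 2 → ℝ))).measurableEmbedding) (g := g)).mpr hg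
  apply this.congr
  exact Filter.Eventually.of_forall fun p => by simp only [Function.comp_apply, e2_comp_eq]

lemma integrableOn_polar (g : ℝ × ℝ → ℂ) (hg : Integrable g) :
    IntegrableOn (fun p : ℝ × ℝ => p.1 • g (polarCoord.symm p)) polarCoord.target := by
  set B : ℝ × ℝ → ℝ × ℝ →L[ℝ] ℝ × ℝ := fun p =>
    LinearMap.toContinuousLinearMap (Matrix.toLin (Module.Basis.finTwoProd ℝ) (Module.Basis.finTwoProd ℝ)
      !![cos p.2, -p.1 * sin p.2; sin p.2, p.1 * cos p.2]) with hB
  have hderiv : ∀ p ∈ polarCoord.target, HasFDerivWithinAt polarCoord.symm (B p)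
      polarCoord.target p := fun p _ => (hasFDerivAt_polarCoord_symm p).hasFDerivWithinAt
  have B_det : ∀ p, (B p).det = p.1 := by
    intro p
    conv_rhs => rw [← one_mul p.1, ← cos_sq_add_sin_sq p.2]
    simp only [hB, neg_mul, LinearMap.det_toContinuousLinearMap, LinearMap.det_toLin,
      Matrix.det_fin_two_of, sub_neg_eq_add]
    ring
  have hmeas : MeasurableSet polarCoord.target := polarCoord.open_target.measurableSet
  have hinj : InjOn polarCoord.symm polarCoord.target := polarCoord.symm.injOn
  have himg : polarCoord.symm '' polarCoord.target = polarCoord.source :=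
    polarCoord.symm_image_target_eq_source
  have hiff := integrableOn_image_iff_integrableOn_abs_det_fderiv_smul volume hmeas hderiv hinj g
  rw [himg] at hiff
  have := hiff.mp hg.integrableOn
  apply this.congr_fun _ hmeas
  intro p hp
  dsimp only
  rw [B_det, abs_of_pos hp.1]

set_option maxHeartbeats 400000 in
/-- For an integrable image `A` supported in the closed unit disk, the `q`-th
angular Fourier coefficient of its Fourier transform `Â` on the circle of radius `k` equals
the Fourier–Bessel inner product of `A` with `(x, θ) ↦ e^{i q (θ + π/2)} J_q(k x)`. -/
theorem fourier_bessel_coefficient_eq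
    (A : EuclideanSpace ℝ (Fin 2) → ℂ) (hA : MeasureTheory.Integrable A)
    (hsupp : ∀ x : EuclideanSpace ℝ (Fin 2), 1 < ‖x‖ → A x = 0)
    (Ahat : EuclideanSpace ℝ (Fin 2) → ℂ)
    (hAhat : ∀ k : EuclideanSpace ℝ (Fin 2),
      Ahat k = ∫ x : EuclideanSpace ℝ (Fin 2),
        A x * Complex.exp (-Complex.I * ((⟪k, x⟫_ℝ : ℝ) : ℂ)))
    (k : ℝ) (hk : 0 ≤ k) (q : ℤ) :
    (1 / (2 * Real.pi) : ℂ) *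
      ∫ ψ in (0:ℝ)..(2 * Real.pi),
        Ahat (e2 (k * Real.cos ψ) (k * Real.sin ψ)) *
          Complex.exp (-Complex.I * ((q : ℂ) * (ψ : ℂ)))
    = ∫ θ in (0:ℝ)..(2 * Real.pi), ∫ x in (0:ℝ)..1,
        A (e2 (x * Real.cos θ) (x * Real.sin θ)) *
          Complex.exp (-Complex.I * ((q : ℂ) * ((θ + Real.pi / 2 : ℝ) : ℂ))) *
          besselJ q (k * x) * (x : ℂ) := by
  have pi_pos := Real.pi_pos
  have h2pi : (0:ℝ) ≤ 2 * Real.pi := by linarith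
  -- the unit-modulus kernel
  set U : ℝ → EuclideanSpace ℝ (Fin 2) → ℂ := fun ψ x =>
    Complex.exp (-Complex.I * ((⟪e2 (k * Real.cos ψ) (k * Real.sin ψ), x⟫_ℝ : ℝ) : ℂ)) *
      Complex.exp (-Complex.I * ((q : ℂ) * (ψ : ℂ))) with hU
  clear_value U
  have hUcont : Continuous fun p : ℝ × EuclideanSpace ℝ (Fin 2) => U p.1 p.2 := by
    simp only [hU]
    apply Continuous.mul
    · apply Complex.continuous_exp.comp
      apply Continuous.mul continuous_const
      apply Complex.continuous_ofReal.comp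
      exact Continuous.inner
        (e2_cont.comp (by fun_prop : Continuous fun p : ℝ × EuclideanSpace ℝ (Fin 2) =>
          ((k * Real.cos p.1, k * Real.sin p.1) : ℝ × ℝ))) continuous_snd
    · apply Complex.continuous_exp.comp
      fun_prop
  have hUnorm : ∀ ψ x, ‖U ψ x‖ = 1 := by
    intro ψ x
    rw [hU]
    simp only [norm_mul]
    rw [norm_exp_neg_I_real]
    have : -Complex.I * ((q : ℂ) * (ψ : ℂ)) = -Complex.I * (((q * ψ : ℝ) : ℝ) : ℂ) := by
      push_cast; ring
    rw [this, norm_exp_neg_I_real, one_mul]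
  -- Φ, the angular integral of the kernel
  set Φ : EuclideanSpace ℝ (Fin 2) → ℂ := fun x => ∫ ψ in (0:ℝ)..(2 * Real.pi), U ψ x with hΦ
  clear_value Φ
  have hΦcont : Continuous Φ := by
    rw [hΦ]
    apply intervalIntegral.continuous_parametric_intervalIntegral_of_continuous'
      (f := fun x ψ => U ψ x)
    exact hUcont.comp (continuous_swap)
  have hΦnorm : ∀ x, ‖Φ x‖ ≤ 2 * Real.pi := by
    intro x
    rw [hΦ]
    have := intervalIntegral.norm_integral_le_of_norm_le_const (C := 1)
      (f := fun ψ => U ψ x) (a := 0) (b := 2 * Real.pi)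
      (fun ψ _ => le_of_eq (hUnorm ψ x))
    simpa [abs_of_nonneg h2pi] using this
  -- Step 1 : express LHS as a double integral and swap
  have μfin : IsFiniteMeasure (volume.restrict (Ioc (0:ℝ) (2 * Real.pi))) := by
    constructor
    rw [Measure.restrict_apply_univ]
    exact measure_Ioc_lt_top
  have hProdInt : Integrable (Function.uncurry fun ψ (x : EuclideanSpace ℝ (Fin 2)) =>
      A x * U ψ x) ((volume.restrict (Ioc (0:ℝ) (2 * Real.pi))).prod volume) := by
    have h0 : Integrable (fun p : ℝ × EuclideanSpace ℝ (Fin 2) => A p.2)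
        ((volume.restrict (Ioc (0:ℝ) (2 * Real.pi))).prod volume) := by
      have := (integrable_const (1:ℂ)
        (μ := volume.restrict (Ioc (0:ℝ) (2 * Real.pi)))).mul_prod hA
      simpa using this
    have h1 : Integrable (fun p : ℝ × EuclideanSpace ℝ (Fin 2) => U p.1 p.2 * A p.2)
        ((volume.restrict (Ioc (0:ℝ) (2 * Real.pi))).prod volume) :=
      h0.bdd_mul (c := 1) hUcont.aestronglyMeasurable
        (Filter.Eventually.of_forall fun p => le_of_eq (hUnorm p.1 p.2))
    exact h1.congr (Filter.Eventually.of_forall fun p => by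
      simp [Function.uncurry, mul_comm])
  have step1 : (∫ ψ in (0:ℝ)..(2 * Real.pi),
        Ahat (e2 (k * Real.cos ψ) (k * Real.sin ψ)) *
          Complex.exp (-Complex.I * ((q : ℂ) * (ψ : ℂ))))
      = ∫ x : EuclideanSpace ℝ (Fin 2), A x * Φ x := by
    have e1 : ∀ ψ : ℝ, Ahat (e2 (k * Real.cos ψ) (k * Real.sin ψ)) *
        Complex.exp (-Complex.I * ((q : ℂ) * (ψ : ℂ)))
        = ∫ x : EuclideanSpace ℝ (Fin 2), A x * U ψ x := by
      intro ψ
      rw [hAhat, ← integral_mul_const]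
      congr 1; funext x; rw [hU]; ring
    rw [intervalIntegral.integral_congr (g := fun ψ =>
      ∫ x : EuclideanSpace ℝ (Fin 2), A x * U ψ x) (fun ψ _ => e1 ψ)]
    rw [intervalIntegral.integral_of_le h2pi]
    have := integral_integral_swap hProdInt
    rw [this]
    congr 1; funext x
    rw [hΦ]
    dsimp only
    rw [intervalIntegral.integral_of_le h2pi, ← integral_const_mul]
  -- Integrability of A * Φ
  have hMint : Integrable (fun x : EuclideanSpace ℝ (Fin 2) => A x * Φ x) := by
    have := hA.bdd_mul (c := 2 * Real.pi) hΦcont.aestronglyMeasurable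
      (Filter.Eventually.of_forall hΦnorm)
    exact this.congr (Filter.Eventually.of_forall fun x => by simp [mul_comm])
  -- Step 2 : polar coordinates
  have step2 : (∫ x : EuclideanSpace ℝ (Fin 2), A x * Φ x)
      = ∫ p in polarCoord.target,
          p.1 • ((fun p : ℝ × ℝ => A (e2 p.1 p.2) * Φ (e2 p.1 p.2)) (polarCoord.symm p)) := by
    rw [integral_e2 (fun x => A x * Φ x)]
    exact (integral_comp_polarCoord_symm (fun p : ℝ × ℝ => A (e2 p.1 p.2) * Φ (e2 p.1 p.2))).symm
  have hPolarInt := integrableOn_polar (fun p : ℝ × ℝ => A (e2 p.1 p.2) * Φ (e2 p.1 p.2))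
    (integrable_e2 _ hMint)
  -- pointwise Bessel evaluation on polar integrand
  have hfun : (fun p : ℝ × ℝ =>
      p.1 • ((fun p : ℝ × ℝ => A (e2 p.1 p.2) * Φ (e2 p.1 p.2)) (polarCoord.symm p)))
      = fun p : ℝ × ℝ => (2 * Real.pi : ℂ) *
          (A (e2 (p.1 * Real.cos p.2) (p.1 * Real.sin p.2)) *
            Complex.exp (-Complex.I * ((q : ℂ) * ((p.2 + Real.pi / 2 : ℝ) : ℂ))) *
            besselJ q (k * p.1) * (p.1 : ℂ)) := by
    funext p
    have hsymm : polarCoord.symm p = (p.1 * Real.cos p.2, p.1 * Real.sin p.2) := rfl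
    rw [hsymm]
    have hΦval : Φ (e2 (p.1 * Real.cos p.2) (p.1 * Real.sin p.2))
        = Complex.exp (-Complex.I * ((q : ℂ) * ((p.2 + Real.pi / 2 : ℝ) : ℂ)))
            * ((2 * Real.pi : ℂ) * besselJ q (k * p.1)) := by
      rw [hΦ]
      rw [← bessel_key k q p.1 p.2]
      apply intervalIntegral.integral_congr
      intro ψ _
      simp only [hU]
      rw [e2_inner]
    dsimp only
    rw [hΦval, Complex.real_smul]
    push_cast
    ring
  rw [step1, step2, hfun]
  -- Step 3 : iterate and swap the polar integral
  have hPolarInt2 : IntegrableOn (fun p : ℝ × ℝ => (2 * Real.pi : ℂ) *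
      (A (e2 (p.1 * Real.cos p.2) (p.1 * Real.sin p.2)) *
        Complex.exp (-Complex.I * ((q : ℂ) * ((p.2 + Real.pi / 2 : ℝ) : ℂ))) *
        besselJ q (k * p.1) * (p.1 : ℂ))) polarCoord.target := by
    rw [← hfun]; exact hPolarInt
  have htarget : polarCoord.target = Ioi (0:ℝ) ×ˢ Ioo (-Real.pi) Real.pi := rfl
  rw [htarget] at hPolarInt2 ⊢
  set G : ℝ × ℝ → ℂ := fun p => (2 * Real.pi : ℂ) *
      (A (e2 (p.1 * Real.cos p.2) (p.1 * Real.sin p.2)) *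
        Complex.exp (-Complex.I * ((q : ℂ) * ((p.2 + Real.pi / 2 : ℝ) : ℂ))) *
        besselJ q (k * p.1) * (p.1 : ℂ)) with hG
  clear_value G
  have step3 : (∫ p in Ioi (0:ℝ) ×ˢ Ioo (-Real.pi) Real.pi, G p)
      = ∫ θ in Ioo (-Real.pi) Real.pi, ∫ r in Ioi (0:ℝ), G (r, θ) := by
    rw [Measure.volume_eq_prod, setIntegral_prod _ (by rw [← Measure.volume_eq_prod]; exact hPolarInt2)]
    have hswap := integral_integral_swap (f := fun r θ => G (r, θ))
      (μ := volume.restrict (Ioi (0:ℝ))) (ν := volume.restrict (Ioo (-Real.pi) Real.pi)) ?_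
    · exact hswap
    · rw [Measure.prod_restrict]
      exact hPolarInt2.congr (Filter.Eventually.of_forall fun p => rfl)
  rw [step3]
  -- Step 4 : truncate the radial integral using the support hypothesis
  have step4 : ∀ θ : ℝ, (∫ r in Ioi (0:ℝ), G (r, θ)) = ∫ r in (0:ℝ)..1, G (r, θ) := by
    intro θ
    rw [intervalIntegral.integral_of_le (zero_le_one)]
    apply setIntegral_eq_of_subset_of_ae_diff_eq_zero measurableSet_Ioi.nullMeasurableSet
      (fun r hr => hr.1)
    apply Filter.Eventually.of_forall
    intro r hr
    have hr1 : 1 < r := by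
      rcases hr with ⟨hr0, hr1⟩
      simp only [mem_Ioc, not_and, not_le] at hr1
      exact hr1 (mem_Ioi.mp hr0)
    have hA0 : A (e2 (r * Real.cos θ) (r * Real.sin θ)) = 0 := by
      apply hsupp
      rw [e2_norm]
      have : (r * Real.cos θ) ^ 2 + (r * Real.sin θ) ^ 2 = r ^ 2 := by
        have := Real.sin_sq_add_cos_sq θ
        nlinarith
      rw [this, Real.sqrt_sq (by linarith)]
      exact hr1
    rw [hG]
    dsimp only
    rw [hA0]
    ring
  rw [setIntegral_congr_fun measurableSet_Ioo (fun θ _ => step4 θ)]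
  -- Step 5 : move the angular integral to [0, 2π] by periodicity
  set h : ℝ → ℂ := fun θ => ∫ r in (0:ℝ)..1, G (r, θ) with hh
  clear_value h
  have hper : Function.Periodic h (2 * Real.pi) := by
    intro θ
    rw [hh]
    dsimp only
    apply intervalIntegral.integral_congr
    intro r _
    rw [hG]
    dsimp only
    rw [Real.cos_add_two_pi, Real.sin_add_two_pi]
    have : Complex.exp (-Complex.I * ((q : ℂ) * ((θ + 2 * Real.pi + Real.pi / 2 : ℝ) : ℂ)))
        = Complex.exp (-Complex.I * ((q : ℂ) * ((θ + Real.pi / 2 : ℝ) : ℂ))) := by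
      rw [show ((θ + 2 * Real.pi + Real.pi / 2 : ℝ) : ℂ)
          = ((θ + Real.pi / 2 : ℝ) : ℂ) + (2 * Real.pi : ℂ) by push_cast; ring]
      rw [show -Complex.I * ((q : ℂ) * (((θ + Real.pi / 2 : ℝ) : ℂ) + (2 * Real.pi : ℂ)))
          = -Complex.I * ((q : ℂ) * ((θ + Real.pi / 2 : ℝ) : ℂ))
            + -Complex.I * ((q : ℂ) * (2 * Real.pi : ℂ)) by push_cast; ring]
      rw [Complex.exp_add, show ((2 * Real.pi : ℂ)) = ((2 : ℂ) * (Real.pi : ℂ)) by norm_num,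
        exp_neg_I_q_two_pi q, mul_one]
    rw [this]
  have step5 : (∫ θ in Ioo (-Real.pi) Real.pi, h θ) = ∫ θ in (0:ℝ)..(2 * Real.pi), h θ := by
    rw [← integral_Ioc_eq_integral_Ioo,
      ← intervalIntegral.integral_of_le (by linarith : -Real.pi ≤ Real.pi)]
    have := hper.intervalIntegral_add_eq (-Real.pi) 0
    rw [show -Real.pi + 2 * Real.pi = Real.pi by ring] at this
    rw [this, zero_add]
  rw [step5]
  -- Step 6 : pull out the constant 2π
  rw [hh, hG]
  dsimp only
  have const1 : ∀ θ : ℝ, (∫ r in (0:ℝ)..1, (2 * Real.pi : ℂ) *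
      (A (e2 (r * Real.cos θ) (r * Real.sin θ)) *
        Complex.exp (-Complex.I * ((q : ℂ) * ((θ + Real.pi / 2 : ℝ) : ℂ))) *
        besselJ q (k * r) * (r : ℂ)))
      = (2 * Real.pi : ℂ) * ∫ r in (0:ℝ)..1,
        (A (e2 (r * Real.cos θ) (r * Real.sin θ)) *
          Complex.exp (-Complex.I * ((q : ℂ) * ((θ + Real.pi / 2 : ℝ) : ℂ))) *
          besselJ q (k * r) * (r : ℂ)) := fun θ => intervalIntegral.integral_const_mul _ _
  rw [intervalIntegral.integral_congr (fun θ _ => const1 θ)]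
  rw [intervalIntegral.integral_const_mul]
  rw [← mul_assoc]
  have hpi : (1 / (2 * Real.pi) : ℂ) * (2 * Real.pi : ℂ) = 1 := by
    have : (2 * (Real.pi:ℂ)) ≠ 0 := by simp [Complex.ofReal_ne_zero, Real.pi_ne_zero]
    field_simp
  rw [hpi, one_mul]
end
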